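/- Let G be a finite undirected graph with Laplacian L, and let f1,...,fk be nonzero real-valued functions on the vertices such that for all i ≠ j, the support of fi is disjoint from the closed neighborhood of the support of fj. Then the k-th smallest eigenvalue of L is at most the maximum over i of ⟨fi, L fi⟩ / ⟨fi, fi⟩. -/

import Mathlib

open SimpleGraph Finset Matrix

/-- The `k`-th smallest eigenvalue (0-indexed) of a Hermitian matrix, obtained by
sorting the eigenvalues (with multiplicity) in nondecreasing order. -/
noncomputable def kthSmallestEigenvalue {n : ℕ} {A : Matrix (Fin n) (Fin n) ℝ}
    (hA : A.IsHermitian) (k : Fin n) : ℝ :=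
  (hA.eigenvalues ∘ (Tuple.sort hA.eigenvalues)) k

/-!
The `f i` are pairwise orthogonal both for the dot product and for the Laplacian form
`⟨u, L w⟩`, because `L w` is supported in the closed neighbourhood of the support of `w`.
So they span a `k`-dimensional space on which the Rayleigh quotient of `∑ cᵢ fᵢ` is a weighted
average of the Rayleigh quotients of the `fᵢ`, hence at most their maximum. By the easy half of
Courant–Fischer, any `k`-dimensional space contains a nonzero vector orthogonal to the
eigenvectors of `λ₁, …, λₖ₋₁`, whose Rayleigh quotient is at least `λₖ`.
-/

namespace LinearMap.BilinForm

variable {R M ι : Type*} [Fintype ι]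

theorem apply_sum_smul_of_iIsOrtho [CommSemiring R] [AddCommMonoid M] [Module R M]
    {B : LinearMap.BilinForm R M} {f : ι → M} (hB : B.iIsOrtho f) (c : ι → R) :
    B (∑ i, c i • f i) (∑ i, c i • f i) = ∑ i, c i ^ 2 * B (f i) (f i) := by
  simp only [map_sum, map_smul, LinearMap.sum_apply, LinearMap.smul_apply, smul_eq_mul]
  refine Finset.sum_congr rfl fun i _ => ?_
  rw [Finset.sum_eq_single i (fun j _ hji => by rw [hB hji, mul_zero]) (by simp)]
  ring

theorem apply_self_le_of_mem_span_of_iIsOrtho [CommRing R] [LinearOrder R]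
    [IsStrictOrderedRing R] [AddCommGroup M] [Module R M] {B Q : LinearMap.BilinForm R M} {f : ι → M}
    (hB : B.iIsOrtho f) (hQ : Q.iIsOrtho f) {m : R}
    (hf : ∀ i, B (f i) (f i) ≤ m * Q (f i) (f i)) {v : M}
    (hv : v ∈ Submodule.span R (Set.range f)) :
    B v v ≤ m * Q v v := by
  obtain ⟨c, rfl⟩ := (Submodule.mem_span_range_iff_exists_fun R).mp hv
  rw [apply_sum_smul_of_iIsOrtho hB, apply_sum_smul_of_iIsOrtho hQ, Finset.mul_sum]
  refine Finset.sum_le_sum fun i _ => ?_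
  calc c i ^ 2 * B (f i) (f i) ≤ c i ^ 2 * (m * Q (f i) (f i)) := by gcongr; exact hf i
    _ = m * (c i ^ 2 * Q (f i) (f i)) := by ring

end LinearMap.BilinForm

theorem Matrix.dotProduct_self_pos {ι R : Type*} [Fintype ι] [Ring R] [LinearOrder R]
    [IsStrictOrderedRing R] {v : ι → R} (hv : v ≠ 0) : 0 < v ⬝ᵥ v :=
  (Finset.sum_nonneg fun i _ => mul_self_nonneg (v i)).lt_of_ne'
    (dotProduct_self_eq_zero.not.mpr hv)

theorem Matrix.dotProduct_eq_zero_of_disjoint_support {ι R : Type*} [Fintype ι]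
    [NonUnitalNonAssocSemiring R] {u w : ι → R}
    (h : Disjoint (Function.support u) (Function.support w)) : u ⬝ᵥ w = 0 :=
  Finset.sum_eq_zero fun x _ => by
    by_cases hx : u x = 0
    · rw [hx, zero_mul]
    · rw [Function.notMem_support.mp (Set.disjoint_left.mp h hx), mul_zero]

theorem SimpleGraph.dotProduct_lapMatrix_mulVec_eq_zero {V R : Type*} [Fintype V]
    [DecidableEq V] [NonAssocRing R] (G : SimpleGraph V) [DecidableRel G.Adj] {u w : V → R}
    (h : ∀ x, u x ≠ 0 → w x = 0 ∧ ∀ y, G.Adj x y → w y = 0) :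
    u ⬝ᵥ G.lapMatrix R *ᵥ w = 0 := by
  refine dotProduct_eq_zero_of_disjoint_support (Set.disjoint_left.mpr fun x hx => ?_)
  obtain ⟨hwx, hwN⟩ := h x hx
  rw [Function.notMem_support, lapMatrix_mulVec_apply, hwx,
    Finset.sum_eq_zero fun y hy => hwN y ((mem_neighborFinset G x y).mp hy)]
  simp

theorem Matrix.dotProduct_mul_mul_star_mulVec {ι R : Type*} [Fintype ι] [CommSemiring R]
    [StarRing R] [TrivialStar R] (U B : Matrix ι ι R) (v : ι → R) :
    v ⬝ᵥ (U * B * star U) *ᵥ v = (star U *ᵥ v) ⬝ᵥ B *ᵥ (star U *ᵥ v) := by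
  rw [← mulVec_mulVec, ← mulVec_mulVec, dotProduct_mulVec, star_eq_conjTranspose,
    conjTranspose_eq_transpose_of_trivial, mulVec_transpose]

namespace Matrix.IsHermitian

variable {ι : Type*} [Fintype ι] [DecidableEq ι] {A : Matrix ι ι ℝ} (hA : A.IsHermitian)

noncomputable def eigenCoords : (ι → ℝ) →ₗ[ℝ] ι → ℝ :=
  (star (hA.eigenvectorUnitary : Matrix ι ι ℝ)).mulVecLin

theorem dotProduct_self_eq_sum_eigenCoords_sq (v : ι → ℝ) :
    v ⬝ᵥ v = ∑ i, hA.eigenCoords v i ^ 2 := by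
  have hU : v ⬝ᵥ v = v ⬝ᵥ ((hA.eigenvectorUnitary : Matrix ι ι ℝ) * 1 *
      star (hA.eigenvectorUnitary : Matrix ι ι ℝ)) *ᵥ v := by
    simp
  rw [hU, dotProduct_mul_mul_star_mulVec, one_mulVec]
  simp only [dotProduct, eigenCoords, mulVecLin_apply, sq]

theorem dotProduct_mulVec_eq_sum_eigenvalues_mul_eigenCoords_sq (v : ι → ℝ) :
    v ⬝ᵥ A *ᵥ v = ∑ i, hA.eigenvalues i * hA.eigenCoords v i ^ 2 := by
  conv_lhs => rw [hA.spectral_theorem, Unitary.conjStarAlgAut_apply,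
    dotProduct_mul_mul_star_mulVec]
  simp only [dotProduct, mulVec_diagonal, eigenCoords, mulVecLin_apply, Function.comp_apply,
    RCLike.ofReal_real_eq_id, id_eq, sq]
  exact Finset.sum_congr rfl fun i _ => by ring

end Matrix.IsHermitian

section KthSmallestEigenvalue

variable {n : ℕ} {A : Matrix (Fin n) (Fin n) ℝ} (hA : A.IsHermitian)

theorem kthSmallestEigenvalue_mul_dotProduct_self_le (k : Fin n) {v : Fin n → ℝ}
    (hv : ∀ j < k, hA.eigenCoords v (Tuple.sort hA.eigenvalues j) = 0) :
    kthSmallestEigenvalue hA k * (v ⬝ᵥ v) ≤ v ⬝ᵥ A *ᵥ v := by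
  set σ := Tuple.sort hA.eigenvalues
  rw [hA.dotProduct_self_eq_sum_eigenCoords_sq,
    hA.dotProduct_mulVec_eq_sum_eigenvalues_mul_eigenCoords_sq, Finset.mul_sum,
    ← Equiv.sum_comp σ, ← Equiv.sum_comp σ (fun i => hA.eigenvalues i * _)]
  refine Finset.sum_le_sum fun j _ => ?_
  rcases lt_or_ge j k with hjk | hkj
  · simp [hv j hjk]
  · exact mul_le_mul_of_nonneg_right (Tuple.monotone_sort hA.eigenvalues hkj) (sq_nonneg _)

theorem kthSmallestEigenvalue_le_of_lt_finrank (k : Fin n) {W : Submodule ℝ (Fin n → ℝ)}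
    (hW : (k : ℕ) < Module.finrank ℝ W) {M : ℝ}
    (hM : ∀ v ∈ W, v ⬝ᵥ A *ᵥ v ≤ M * (v ⬝ᵥ v)) :
    kthSmallestEigenvalue hA k ≤ M := by
  let P : W →ₗ[ℝ] Fin k → ℝ :=
    LinearMap.funLeft ℝ ℝ (Tuple.sort hA.eigenvalues ∘ Fin.castLE k.is_lt.le) ∘ₗ
      hA.eigenCoords ∘ₗ W.subtype
  obtain ⟨⟨v, hvW⟩, hvP, hv0⟩ := Submodule.exists_mem_ne_zero_of_ne_bot
    (LinearMap.ker_ne_bot_of_finrank_lt (f := P) (by simpa using hW))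
  have hv : ∀ j < k, hA.eigenCoords v (Tuple.sort hA.eigenvalues j) = 0 :=
    fun j hj => congrFun hvP ⟨j, hj⟩
  exact le_of_mul_le_mul_right
    ((kthSmallestEigenvalue_mul_dotProduct_self_le hA k hv).trans (hM v hvW))
    (dotProduct_self_pos (by simpa using hv0))

end KthSmallestEigenvalue

/-- If `f 1, …, f k` are nonzero functions on the vertices of a finite graph `G` such that
for `i ≠ j` the support of `f i` is disjoint from the closed neighborhood of the support
of `f j`, then the `k`-th smallest Laplacian eigenvalue is at most the maximum Rayleigh
quotient `⟨f i, L (f i)⟩ / ⟨f i, f i⟩`. -/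
theorem kth_eigenvalue_le_max_rayleigh (n k : ℕ) (hk : 0 < k) (hkn : k ≤ n)
    (G : SimpleGraph (Fin n)) [DecidableRel G.Adj]
    (f : Fin k → (Fin n → ℝ))
    (hf : ∀ i, f i ≠ 0)
    (hsupp : ∀ i j, i ≠ j → ∀ x, f i x ≠ 0 →
      f j x = 0 ∧ ∀ y, G.Adj x y → f j y = 0) :
    kthSmallestEigenvalue (Matrix.PosSemidef.isHermitian
        (SimpleGraph.posSemidef_lapMatrix ℝ G)) ⟨k - 1, by omega⟩ ≤
      Finset.univ.sup' (Finset.univ_nonempty_iff.mpr ⟨⟨0, hk⟩⟩)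
        (fun i : Fin k =>
          (f i ⬝ᵥ (G.lapMatrix ℝ) *ᵥ f i) / (f i ⬝ᵥ f i)) := by
  set rayleigh := fun i : Fin k => (f i ⬝ᵥ (G.lapMatrix ℝ) *ᵥ f i) / (f i ⬝ᵥ f i)
  set M := Finset.univ.sup' (Finset.univ_nonempty_iff.mpr ⟨⟨0, hk⟩⟩) rayleigh
  have hdot : LinearMap.BilinForm.iIsOrtho (dotProductBilin ℝ ℝ) f := fun i j hij =>
    dotProduct_eq_zero_of_disjoint_support (Set.disjoint_left.mpr fun x hx =>
      Function.notMem_support.mpr (hsupp i j hij x hx).1)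
  have hlap : (toBilin' (G.lapMatrix ℝ)).iIsOrtho f := fun i j hij =>
    (toBilin'_apply' _ _ _).trans (G.dotProduct_lapMatrix_mulVec_eq_zero (hsupp i j hij))
  have hrayleigh (i : Fin k) :
      toBilin' (G.lapMatrix ℝ) (f i) (f i) ≤ M * dotProductBilin ℝ ℝ (f i) (f i) := by
    rw [toBilin'_apply', dotProductBilin_apply_apply,
      ← div_le_iff₀ (dotProduct_self_pos (hf i))]
    exact Finset.le_sup' rayleigh (Finset.mem_univ i)
  refine kthSmallestEigenvalue_le_of_lt_finrank _ _ (W := Submodule.span ℝ (Set.range f)) ?_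
    fun v hv => ?_
  · rw [finrank_span_eq_card (LinearMap.BilinForm.linearIndependent_of_iIsOrtho hdot
      fun i => (dotProduct_self_pos (hf i)).ne')]
    simp only [Fintype.card_fin]
    omega
  · simpa only [toBilin'_apply', dotProductBilin_apply_apply] using
      LinearMap.BilinForm.apply_self_le_of_mem_span_of_iIsOrtho hlap hdot hrayleigh hv
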